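/- Let X be a metric space. A sequence (c_n) of generalized geodesics converges to a generalized geodesic c with respect to the metric d_FS if and only if c_n → c uniformly on compact subsets of ℝ. -/

import Mathlib

/-!
Generalized geodesics are 1-Lipschitz, so `t ↦ dist (c t) (d t)` is 2-Lipschitz and grows at
most like `dist (c 0) (d 0) + 2 |t|`, which the weight `e^{-|t|}` makes integrable; pointwise
convergence then gives `d_FS → 0` by dominated convergence. Conversely, a gap `η ≤ 1` at time
`t` persists as a gap `η / 2` on `[t, t + η / 4]`, which forces
`d_FS ≥ η² / (16 e^{|t| + 1})`, a bound that is uniform for `t` in a compact set.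
-/

open Metric Real MeasureTheory Set

variable {X : Type*}

/-- Witness data for a generalized geodesic: `c` is locally constant outside the
interval `(a, b)` and restricts to an isometric embedding on `[a, b]`. -/
def GenGeodesicWitness [MetricSpace X] (c : ℝ → X) (a b : EReal) : Prop :=
  a ≤ b ∧ a ≠ ⊤ ∧ b ≠ ⊥ ∧
    (∀ s t : ℝ, (s : EReal) ≤ a → (t : EReal) ≤ a → c s = c t) ∧
    (∀ s t : ℝ, b ≤ (s : EReal) → b ≤ (t : EReal) → c s = c t) ∧
    (∀ s t : ℝ, a ≤ (s : EReal) → (s : EReal) ≤ b → a ≤ (t : EReal) → (t : EReal) ≤ b →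
      dist (c s) (c t) = |s - t|)

/-- A generalized geodesic in a metric space. -/
def IsGenGeodesic [MetricSpace X] (c : ℝ → X) : Prop := ∃ a b : EReal, GenGeodesicWitness c a b

/-- The metric of the flow space `FS(X)`. -/
noncomputable def fsDist [MetricSpace X] (c d : ℝ → X) : ℝ :=
  ∫ t : ℝ, dist (c t) (d t) / (2 * Real.exp |t|)


open Filter Topology NNReal

theorem LipschitzOnWith.of_inter_preimage_Iic_Ici [PseudoMetricSpace X] {f : ℝ → X}
    {K : ℝ≥0} {S : Set ℝ} (hS : S.OrdConnected) (e : EReal)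
    (hle : LipschitzOnWith K f (S ∩ (↑) ⁻¹' Iic e))
    (hge : LipschitzOnWith K f (S ∩ (↑) ⁻¹' Ici e)) :
    LipschitzOnWith K f S := by
  refine LipschitzOnWith.of_dist_le_mul fun s hs t ht => ?_
  wlog hst : s ≤ t generalizing s t
  · rw [dist_comm, dist_comm s]
    exact this t ht s hs (le_of_not_ge hst)
  rcases le_total (t : EReal) e with hte | het
  · exact hle.dist_le_mul s ⟨hs, (EReal.coe_le_coe hst).trans hte⟩ t ⟨ht, hte⟩
  rcases le_total e (s : EReal) with hes | hse
  · exact hge.dist_le_mul s ⟨hs, hes⟩ t ⟨ht, hes.trans (EReal.coe_le_coe hst)⟩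
  induction e using EReal.rec with
  | bot => exact absurd hse (by simp)
  | top => exact absurd het (by simp)
  | coe r =>
    rw [EReal.coe_le_coe_iff] at hse het
    have hr : r ∈ S := hS.out hs ht ⟨hse, het⟩
    calc dist (f s) (f t) ≤ dist (f s) (f r) + dist (f r) (f t) := dist_triangle _ _ _
      _ ≤ K * dist s r + K * dist r t :=
        add_le_add
          (hle.dist_le_mul s ⟨hs, EReal.coe_le_coe hse⟩ r ⟨hr, le_refl (r : EReal)⟩)
          (hge.dist_le_mul r ⟨hr, le_refl (r : EReal)⟩ t ⟨ht, EReal.coe_le_coe het⟩)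
      _ = K * dist s t := by
        rw [Real.dist_eq, Real.dist_eq, Real.dist_eq, abs_of_nonpos (by linarith),
          abs_of_nonpos (by linarith), abs_of_nonpos (by linarith)]
        ring

theorem LipschitzWith.dist_apply [PseudoMetricSpace X] {α : Type*} [PseudoMetricSpace α]
    {f g : α → X} {Kf Kg : ℝ≥0} (hf : LipschitzWith Kf f) (hg : LipschitzWith Kg g) :
    LipschitzWith (Kf + Kg) fun x => dist (f x) (g x) :=
  LipschitzWith.of_dist_le_mul fun x y => by
    rw [NNReal.coe_add, add_mul]
    exact (dist_dist_dist_le _ _ _ _).trans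
      (add_le_add (hf.dist_le_mul x y) (hg.dist_le_mul x y))

theorem integrable_comp_abs_of_integrableOn_Ioi {f : ℝ → ℝ} (hf : IntegrableOn f (Ioi 0)) :
    Integrable fun x => f |x| := by
  have hpos : IntegrableOn (fun x => f |x|) (Ioi 0) :=
    hf.congr_fun (fun x hx => by rw [abs_of_pos hx]) measurableSet_Ioi
  have hneg : IntegrableOn (fun x => f |x|) (Iic 0) := by
    rw [← Measure.map_neg_eq_self (volume : Measure ℝ),
      (measurableEmbedding_neg (α := ℝ)).integrableOn_map_iff]
    simpa [Function.comp_def] using (integrableOn_Ici_iff_integrableOn_Ioi).mpr hpos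
  rw [← integrableOn_univ, ← Iic_union_Ioi (a := (0 : ℝ))]
  exact hneg.union hpos

theorem integrable_add_two_mul_abs_div_exp_abs (M : ℝ) :
    Integrable fun t : ℝ => (M + 2 * |t|) / (2 * exp |t|) := by
  refine integrable_comp_abs_of_integrableOn_Ioi (f := fun t => (M + 2 * t) / (2 * exp t)) ?_
  have hexp : IntegrableOn (fun t : ℝ => exp (-t)) (Ioi 0) := by
    simpa using Real.GammaIntegral_convergent one_pos
  have hmul : IntegrableOn (fun t : ℝ => exp (-t) * t) (Ioi 0) := by
    simpa [show (2 : ℝ) - 1 = 1 by norm_num] using Real.GammaIntegral_convergent two_pos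
  refine IntegrableOn.congr_fun ((hexp.const_mul (M / 2)).add hmul) (fun t _ => ?_)
    measurableSet_Ioi
  simp only [Pi.add_apply, exp_neg]
  field_simp

section FlowSpace

variable [MetricSpace X] {c d : ℝ → X}

theorem GenGeodesicWitness.lipschitzWith {a b : EReal}
    (h : GenGeodesicWitness c a b) : LipschitzWith 1 c := by
  obtain ⟨-, -, -, hconst_a, hconst_b, hiso⟩ := h
  rw [← lipschitzOnWith_univ]
  refine LipschitzOnWith.of_inter_preimage_Iic_Ici ordConnected_univ a
    (LipschitzOnWith.of_dist_le_mul fun s hs t ht => by simp [hconst_a s t hs.2 ht.2]) ?_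
  refine LipschitzOnWith.of_inter_preimage_Iic_Ici
    (ordConnected_univ.inter (ordConnected_Ici.preimage_mono EReal.coe_strictMono.monotone)) b
    (LipschitzOnWith.of_dist_le_mul fun s hs t ht => ?_)
    (LipschitzOnWith.of_dist_le_mul fun s hs t ht => by simp [hconst_b s t hs.2 ht.2])
  rw [hiso s t hs.1.2 hs.2 ht.1.2 ht.2, NNReal.coe_one, one_mul, Real.dist_eq]

theorem IsGenGeodesic.lipschitzWith (h : IsGenGeodesic c) : LipschitzWith 1 c :=
  let ⟨_, _, hw⟩ := h
  hw.lipschitzWith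

theorem fsDist_nonneg (c d : ℝ → X) : 0 ≤ fsDist c d :=
  integral_nonneg fun t => by positivity

theorem continuous_fsIntegrand (hc : Continuous c) (hd : Continuous d) :
    Continuous fun t => dist (c t) (d t) / (2 * exp |t|) :=
  (hc.dist hd).div (by fun_prop) fun t => by positivity

theorem dist_le_dist_zero_add (hc : LipschitzWith 1 c) (hd : LipschitzWith 1 d) (t : ℝ) :
    dist (c t) (d t) ≤ dist (c 0) (d 0) + 2 * |t| := by
  have := (hc.dist_apply hd).dist_le_mul t 0
  rw [Real.dist_eq, Real.dist_eq, sub_zero, NNReal.coe_add, NNReal.coe_one] at this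
  linarith [le_abs_self (dist (c t) (d t) - dist (c 0) (d 0))]

theorem fsIntegrand_le (hc : LipschitzWith 1 c) (hd : LipschitzWith 1 d) {M : ℝ}
    (hM : dist (c 0) (d 0) ≤ M) (t : ℝ) :
    dist (c t) (d t) / (2 * exp |t|) ≤ (M + 2 * |t|) / (2 * exp |t|) := by
  gcongr
  exact (dist_le_dist_zero_add hc hd t).trans (by linarith)

theorem integrable_fsIntegrand (hc : LipschitzWith 1 c) (hd : LipschitzWith 1 d) :
    Integrable fun t => dist (c t) (d t) / (2 * exp |t|) :=
  (integrable_add_two_mul_abs_div_exp_abs (dist (c 0) (d 0))).mono'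
    (continuous_fsIntegrand hc.continuous hd.continuous).aestronglyMeasurable
    (ae_of_all _ fun t => by
      rw [Real.norm_of_nonneg (by positivity)]
      exact fsIntegrand_le hc hd le_rfl t)

theorem min_dist_one_sq_le_fsDist (hc : LipschitzWith 1 c) (hd : LipschitzWith 1 d) (t : ℝ) :
    min (dist (c t) (d t)) 1 ^ 2 ≤ 16 * exp (|t| + 1) * fsDist c d := by
  set η := min (dist (c t) (d t)) 1
  have hη₀ : 0 ≤ η := le_min dist_nonneg zero_le_one
  have hηd : η ≤ dist (c t) (d t) := min_le_left _ _
  have hη₁ : η ≤ 1 := min_le_right _ _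
  have hlower : ∀ u ∈ Icc t (t + η / 4),
      η / 2 / (2 * exp (|t| + 1)) ≤ dist (c u) (d u) / (2 * exp |u|) := by
    intro u ⟨htu, hut⟩
    have hlip := (hc.dist_apply hd).dist_le_mul u t
    rw [Real.dist_eq, Real.dist_eq, NNReal.coe_add, NNReal.coe_one,
      abs_of_nonneg (sub_nonneg.mpr htu)] at hlip
    have hdist : η / 2 ≤ dist (c u) (d u) := by
      linarith [neg_abs_le (dist (c u) (d u) - dist (c t) (d t))]
    have habs : |u| ≤ |t| + 1 := by
      linarith [abs_sub_abs_le_abs_sub u t, abs_of_nonneg (sub_nonneg.mpr htu)]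
    gcongr
  have hvol : volume.real (Icc t (t + η / 4)) = η / 4 := by
    rw [Real.volume_real_Icc, add_sub_cancel_left, max_eq_left (by positivity)]
  have hint := integrable_fsIntegrand hc hd
  calc η ^ 2 = 16 * exp (|t| + 1) *
        (η / 2 / (2 * exp (|t| + 1)) * volume.real (Icc t (t + η / 4))) := by
        rw [hvol]; field_simp; ring
    _ ≤ 16 * exp (|t| + 1) * ∫ u in Icc t (t + η / 4), dist (c u) (d u) / (2 * exp |u|) := by
        gcongr
        exact setIntegral_ge_of_const_le_real measurableSet_Icc measure_Icc_lt_top.ne hlower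
          hint.integrableOn
    _ ≤ 16 * exp (|t| + 1) * fsDist c d := by
        gcongr
        exact setIntegral_le_integral hint (ae_of_all _ fun u => by positivity)

theorem tendsto_fsDist_of_tendsto_pi {ι : Type*} {l : Filter ι} [l.IsCountablyGenerated]
    {cs : ι → ℝ → X} (hcs : ∀ n, LipschitzWith 1 (cs n)) (hc : LipschitzWith 1 c)
    (h : ∀ t, Tendsto (fun n => cs n t) l (𝓝 (c t))) :
    Tendsto (fun n => fsDist (cs n) c) l (𝓝 0) := by
  have hbound : ∀ᶠ n in l, ∀ t,
      dist (cs n t) (c t) / (2 * exp |t|) ≤ (1 + 2 * |t|) / (2 * exp |t|) := by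
    filter_upwards [(h 0).eventually (ball_mem_nhds (c 0) one_pos)] with n hn t
    exact fsIntegrand_le (hcs n) hc hn.le t
  have := tendsto_integral_filter_of_dominated_convergence (μ := volume) _
    (Eventually.of_forall fun n =>
      (continuous_fsIntegrand (hcs n).continuous hc.continuous).aestronglyMeasurable)
    (hbound.mono fun n hn => ae_of_all _ fun t => by
      rw [Real.norm_of_nonneg (by positivity)]; exact hn t)
    (integrable_add_two_mul_abs_div_exp_abs 1)
    (ae_of_all _ fun t => ((tendsto_iff_dist_tendsto_zero.mp (h t)).div_const _))
  simpa [fsDist] using this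

theorem tendstoUniformlyOn_of_tendsto_fsDist {ι : Type*} {l : Filter ι} {cs : ι → ℝ → X}
    (hcs : ∀ n, LipschitzWith 1 (cs n)) (hc : LipschitzWith 1 c)
    (h : Tendsto (fun n => fsDist (cs n) c) l (𝓝 0)) {K : Set ℝ} (hK : Bornology.IsBounded K) :
    TendstoUniformlyOn cs c l K := by
  obtain ⟨T, hT⟩ := hK.subset_closedBall 0
  rw [Metric.tendstoUniformlyOn_iff]
  intro ε hε
  set η := min ε 1
  have hη : 0 < η := lt_min hε one_pos
  filter_upwards [h.eventually_lt_const (by positivity : 0 < η ^ 2 / (16 * exp (T + 1)))]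
    with n hn t ht
  have htT : |t| ≤ T := by simpa using hT ht
  have hsq : min (dist (cs n t) (c t)) 1 ^ 2 < η ^ 2 :=
    calc _ ≤ 16 * exp (|t| + 1) * fsDist (cs n) c := min_dist_one_sq_le_fsDist (hcs n) hc t
      _ ≤ 16 * exp (T + 1) * fsDist (cs n) c := by gcongr; exact fsDist_nonneg _ _
      _ < η ^ 2 := by rwa [lt_div_iff₀' (by positivity)] at hn
  have hmin := lt_of_pow_lt_pow_left₀ 2 hη.le hsq
  rw [dist_comm]
  by_contra! hge
  exact hmin.not_ge (min_le_min_right 1 hge)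

end FlowSpace

/-- A sequence of generalized geodesics converges in the flow-space metric
`d_FS` if and only if it converges uniformly on compact subsets of `ℝ`. -/
theorem fsDist_tendsto_iff_locallyUniform [MetricSpace X]
    (cs : ℕ → ℝ → X) (c : ℝ → X)
    (hcs : ∀ n, IsGenGeodesic (cs n)) (hc : IsGenGeodesic c) :
    (∀ K : Set ℝ, IsCompact K → TendstoUniformlyOn cs c Filter.atTop K) ↔
      Filter.Tendsto (fun n => fsDist (cs n) c) Filter.atTop (nhds 0) := by
  have hlip n := (hcs n).lipschitzWith
  refine ⟨fun h => ?_, fun h K hK => ?_⟩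
  · exact tendsto_fsDist_of_tendsto_pi hlip hc.lipschitzWith fun t =>
      (h {t} isCompact_singleton).tendsto_at rfl
  · exact tendstoUniformlyOn_of_tendsto_fsDist hlip hc.lipschitzWith h hK.isBounded
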